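/- (Bayes-decision comparison lemma.) Let μ and ν be probability measures on a measurable space Z, let B be a set of actions, and let ℓ : B × Z → ℝ be a loss function, measurable in z for each action. Suppose b̂ ∈ B minimizes b ↦ ∫ ℓ(b, z) dν(z) over B, b* ∈ B minimizes b ↦ ∫ ℓ(b, z) dμ(z) over B, and sup_{z ∈ Z} |ℓ(b̂, z) − ℓ(b*, z)| ≤ M. Then ∫ ℓ(b̂, z) dμ(z) − ∫ ℓ(b*, z) dμ(z) ≤ M √(2 KL(μ ‖ ν)). -/

import Mathlib

open MeasureTheory Classical

/-- The Kullback–Leibler divergence `KL(P ‖ Q)`, defined as `∫ log (dP/dQ) dP` when `P ≪ Q`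
(and this integral is defined), and `+∞` otherwise. -/
noncomputable def klDiv {α : Type*} [MeasurableSpace α] (P Q : Measure α) : EReal :=
  if P ≪ Q ∧ Integrable (fun x => Real.log (P.rnDeriv Q x).toReal) P then
    ((∫ x, Real.log (P.rnDeriv Q x).toReal ∂P : ℝ) : EReal)
  else ⊤

/-! With `g = ℓ bhat - ℓ bstar` and `f = dμ/dν`, optimality of `bhat` under `ν` gives
`∫ g dν ≤ 0`, so the excess `μ`-risk is at most `∫ g dμ - ∫ g dν = ∫ g (f - 1) dν ≤ M ∫ |f - 1| dν`.
Pinsker's inequality `∫ |f - 1| dν ≤ √(2 KL(μ ‖ ν))` follows from the pointwise bound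
`3 (t - 1)² ≤ (2t + 4) (t log t + 1 - t)` by Cauchy–Schwarz, since `∫ (2f + 4)/3 dν = 2` and
`∫ (f log f + 1 - f) dν = KL(μ ‖ ν)`. -/

open Set Real
open InformationTheory hiding klDiv

theorem isMinOn_Ioi_of_hasDerivAt {f f' : ℝ → ℝ} {a c : ℝ} (hc : a < c)
    (hf : ∀ x ∈ Ioi a, HasDerivAt f (f' x) x)
    (hleft : ∀ x ∈ Ioo a c, f' x ≤ 0) (hright : ∀ x ∈ Ioi c, 0 ≤ f' x) :
    IsMinOn f (Ioi a) c := by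
  have hcont : ContinuousOn f (Ioi a) := fun x hx => (hf x hx).continuousAt.continuousWithinAt
  intro x (hx : a < x)
  rcases le_total x c with hxc | hcx
  · refine antitoneOn_of_hasDerivWithinAt_nonpos (f' := f') (convex_Ioc a c)
      (hcont.mono Ioc_subset_Ioi_self) (fun y hy => ?_) (fun y hy => ?_) ⟨hx, hxc⟩ ⟨hc, le_rfl⟩ hxc
    · rw [interior_Ioc] at hy ⊢
      exact (hf y hy.1).hasDerivWithinAt
    · rw [interior_Ioc] at hy
      exact hleft y hy
  · refine monotoneOn_of_hasDerivWithinAt_nonneg (f' := f') (convex_Ici c)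
      (hcont.mono fun y hy => hc.trans_le hy) (fun y hy => ?_) (fun y hy => ?_)
      (mem_Ici.2 le_rfl) hcx hcx
    · rw [interior_Ici] at hy ⊢
      exact (hf y (hc.trans hy)).hasDerivWithinAt
    · rw [interior_Ici] at hy
      exact hright y hy

theorem monotoneOn_add_one_mul_log_sub :
    MonotoneOn (fun t => (t + 1) * log t - 2 * (t - 1)) (Ioi 0) := by
  have hderiv : ∀ t ∈ Ioi (0 : ℝ),
      HasDerivAt (fun t => (t + 1) * log t - 2 * (t - 1)) (log t + t⁻¹ - 1) t := by
    intro t (ht : 0 < t)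
    refine ((((hasDerivAt_id t).add_const 1).mul (hasDerivAt_log ht.ne')).sub
      (((hasDerivAt_id t).sub_const 1).const_mul 2)).congr_deriv ?_
    simp only [id]
    field_simp
    ring
  refine monotoneOn_of_hasDerivWithinAt_nonneg (f' := fun t => log t + t⁻¹ - 1) (convex_Ioi 0)
    (fun t ht => (hderiv t ht).continuousAt.continuousWithinAt) (fun t ht => ?_) (fun t ht => ?_)
  · rw [interior_Ioi] at ht ⊢
    exact (hderiv t ht).hasDerivWithinAt
  · rw [interior_Ioi] at ht
    linarith [one_sub_inv_le_log_of_pos ht]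

theorem sq_sub_one_le_mul_klFun {t : ℝ} (ht : 0 ≤ t) :
    (t - 1) ^ 2 ≤ (2 * t + 4) / 3 * klFun t := by
  set h := fun t => (t + 1) * log t - 2 * (t - 1)
  have hderiv : ∀ x ∈ Ioi (0 : ℝ),
      HasDerivAt (fun t => (2 * t + 4) * klFun t - 3 * (t - 1) ^ 2) (4 * h x) x := by
    intro x (hx : 0 < x)
    refine ((((hasDerivAt_id x).const_mul 2).add_const 4).mul (hasDerivAt_klFun hx.ne')).sub
      ((((hasDerivAt_id x).sub_const 1).pow 2).const_mul 3) |>.congr_deriv ?_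
    simp only [h, id, klFun]
    ring
  have h_one : h 1 = 0 := by norm_num [h]
  have hmin : IsMinOn (fun t => (2 * t + 4) * klFun t - 3 * (t - 1) ^ 2) (Ioi 0) 1 := by
    refine isMinOn_Ioi_of_hasDerivAt one_pos hderiv (fun x hx => ?_) (fun x hx => ?_)
    · linarith [monotoneOn_add_one_mul_log_sub hx.1 (mem_Ioi.2 one_pos) hx.2.le]
    · linarith [monotoneOn_add_one_mul_log_sub (mem_Ioi.2 one_pos) (mem_Ioi.2 (one_pos.trans hx))
        hx.le]
  rcases ht.eq_or_lt with rfl | ht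
  · norm_num [klFun_zero]
  · have := isMinOn_iff.1 hmin t ht
    norm_num [klFun_one] at this
    linarith

theorem integral_abs_le_sqrt_mul_sqrt_of_sq_le_mul {Ω : Type*} [MeasurableSpace Ω] {μ : Measure Ω}
    {a w k : Ω → ℝ} (ha : AEStronglyMeasurable a μ) (hw : Integrable w μ) (hk : Integrable k μ)
    (hw0 : ∀ x, 0 ≤ w x) (hk0 : ∀ x, 0 ≤ k x) (hawk : ∀ x, a x ^ 2 ≤ w x * k x) :
    ∫ x, |a x| ∂μ ≤ √(∫ x, w x ∂μ) * √(∫ x, k x ∂μ) := by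
  set u := fun x => √(w x)
  set v := fun x => |a x| / √(w x)
  have hu_sq : ∀ x, u x ^ 2 = w x := fun x => sq_sqrt (hw0 x)
  have hv_sq : ∀ x, v x ^ 2 ≤ k x := by
    intro x
    rcases (hw0 x).eq_or_lt with hwx | hwx
    · simp [v, ← hwx, hk0 x]
    · rw [div_pow, sq_abs, sq_sqrt hwx.le, div_le_iff₀ hwx, mul_comm]
      exact hawk x
  have huv : ∀ x, u x * v x = |a x| := by
    intro x
    rcases (hw0 x).eq_or_lt with hwx | hwx
    · have hax : a x = 0 := pow_eq_zero_iff two_ne_zero |>.1 <|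
        (hawk x).trans (by simp [← hwx]) |>.antisymm (sq_nonneg _)
      simp [u, v, ← hwx, hax]
    · exact mul_div_cancel₀ _ (sqrt_pos.2 hwx).ne'
  have hu_meas : AEStronglyMeasurable u μ :=
    continuous_sqrt.comp_aestronglyMeasurable hw.aestronglyMeasurable
  have hv_meas : AEStronglyMeasurable v μ :=
    (ha.aemeasurable.abs.div hu_meas.aemeasurable).aestronglyMeasurable
  have hu : MemLp u 2 μ := by
    rw [memLp_two_iff_integrable_sq hu_meas]
    simpa only [hu_sq] using hw
  have hv : MemLp v 2 μ := by
    rw [memLp_two_iff_integrable_sq hv_meas]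
    refine hk.mono' (hv_meas.pow 2) (.of_forall fun x => ?_)
    rw [norm_of_nonneg (sq_nonneg _)]
    exact hv_sq x
  calc ∫ x, |a x| ∂μ = ∫ x, u x * v x ∂μ := by simp only [huv]
    _ ≤ (∫ x, u x ^ 2 ∂μ) ^ (1 / 2 : ℝ) * (∫ x, v x ^ 2 ∂μ) ^ (1 / 2 : ℝ) := by
      simpa only [rpow_two] using integral_mul_le_Lp_mul_Lq_of_nonneg HolderConjugate.two_two
        (.of_forall fun x => sqrt_nonneg _) (.of_forall fun x => by positivity)
        (by rwa [ENNReal.ofReal_ofNat]) (by rwa [ENNReal.ofReal_ofNat])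
    _ ≤ √(∫ x, w x ∂μ) * √(∫ x, k x ∂μ) := by
      simp only [hu_sq, ← sqrt_eq_rpow]
      gcongr
      exacts [hv.integrable_sq, hv_sq]

theorem integral_abs_toReal_rnDeriv_sub_one_le {Ω : Type*} [MeasurableSpace Ω] (μ ν : Measure Ω)
    [IsProbabilityMeasure μ] [IsProbabilityMeasure ν] (hμν : μ ≪ ν)
    (hllr : Integrable (llr μ ν) μ) :
    ∫ x, |(μ.rnDeriv ν x).toReal - 1| ∂ν ≤ √(2 * ∫ x, llr μ ν x ∂μ) := by
  set f := fun x => (μ.rnDeriv ν x).toReal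
  have hf : Integrable f ν := Measure.integrable_toReal_rnDeriv
  have hf_one : ∫ x, f x ∂ν = 1 := by simp [f, Measure.integral_toReal_rnDeriv hμν]
  have hweight : ∫ x, (2 * f x + 4) / 3 ∂ν = 2 := by
    rw [integral_div, integral_add (hf.const_mul 2) (integrable_const 4), integral_const_mul,
      hf_one]
    norm_num
  have hkl : ∫ x, klFun (f x) ∂ν = ∫ x, llr μ ν x ∂μ := by
    simp [f, integral_klFun_rnDeriv hμν hllr]
  calc ∫ x, |f x - 1| ∂ν ≤ √(∫ x, (2 * f x + 4) / 3 ∂ν) * √(∫ x, klFun (f x) ∂ν) :=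
        integral_abs_le_sqrt_mul_sqrt_of_sq_le_mul
          (hf.sub (integrable_const 1)).aestronglyMeasurable
          (((hf.const_mul 2).add (integrable_const 4)).div_const 3)
          ((integrable_klFun_rnDeriv_iff hμν).2 hllr)
          (fun x => by positivity) (fun x => klFun_nonneg ENNReal.toReal_nonneg)
          (fun x => sq_sub_one_le_mul_klFun ENNReal.toReal_nonneg)
    _ = √(2 * ∫ x, llr μ ν x ∂μ) := by rw [hweight, hkl, sqrt_mul zero_le_two]

theorem integral_sub_integral_le_mul_integral_abs_toReal_rnDeriv_sub_one {Ω : Type*}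
    [MeasurableSpace Ω] {μ ν : Measure Ω} [IsFiniteMeasure μ] [IsFiniteMeasure ν] (hμν : μ ≪ ν)
    {g : Ω → ℝ} {M : ℝ} (hgμ : Integrable g μ) (hgν : Integrable g ν) (hg : ∀ x, |g x| ≤ M) :
    ∫ x, g x ∂μ - ∫ x, g x ∂ν ≤ M * ∫ x, |(μ.rnDeriv ν x).toReal - 1| ∂ν := by
  set f := fun x => (μ.rnDeriv ν x).toReal
  have hfg : Integrable (fun x => f x * g x) ν := (integrable_toReal_rnDeriv_mul_iff hμν).2 hgμ
  have hf : Integrable f ν := Measure.integrable_toReal_rnDeriv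
  calc ∫ x, g x ∂μ - ∫ x, g x ∂ν = ∫ x, f x * g x - g x ∂ν := by
        rw [← integral_toReal_rnDeriv_mul hμν, integral_sub hfg hgν]
    _ ≤ ∫ x, M * |f x - 1| ∂ν := by
        refine integral_mono (hfg.sub hgν) ((hf.sub (integrable_const 1)).abs.const_mul M)
          fun x => ?_
        calc f x * g x - g x = g x * (f x - 1) := by ring
          _ ≤ |g x| * |f x - 1| := (le_abs_self _).trans_eq (abs_mul _ _)
          _ ≤ M * |f x - 1| := by gcongr; exact hg x
    _ = M * ∫ x, |f x - 1| ∂ν := integral_const_mul M _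

theorem bayes_decision_comparison_general
    {Z : Type*} [MeasurableSpace Z] (μ ν : Measure Z)
    [IsProbabilityMeasure μ] [IsProbabilityMeasure ν]
    {B : Type*} (ℓ : B → Z → ℝ)
    (bhat bstar : B)
    (hbhat_int_μ : Integrable (ℓ bhat) μ) (hbhat_int_ν : Integrable (ℓ bhat) ν)
    (hbstar_int_μ : Integrable (ℓ bstar) μ) (hbstar_int_ν : Integrable (ℓ bstar) ν)
    (hbhat : ∀ b : B, ∫ z, ℓ bhat z ∂ν ≤ ∫ z, ℓ b z ∂ν)
    (M : ℝ) (hM : ∀ z, |ℓ bhat z - ℓ bstar z| ≤ M) :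
    klDiv μ ν = ⊤ ∨
      ∫ z, ℓ bhat z ∂μ - ∫ z, ℓ bstar z ∂μ ≤ M * Real.sqrt (2 * (klDiv μ ν).toReal) := by
  by_cases hfin : μ ≪ ν ∧ Integrable (llr μ ν) μ
  swap
  · exact .inl (if_neg hfin)
  right
  obtain ⟨hμν, hllr⟩ := hfin
  have hkl : (klDiv μ ν).toReal = ∫ z, llr μ ν z ∂μ := by
    rw [klDiv, if_pos ⟨hμν, hllr⟩]
    rfl
  have hM0 : 0 ≤ M := (abs_nonneg _).trans (hM (nonempty_of_isProbabilityMeasure μ).some)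
  have hrisk_ν : ∫ z, ℓ bhat z - ℓ bstar z ∂ν ≤ 0 := by
    rw [integral_sub hbhat_int_ν hbstar_int_ν]
    linarith [hbhat bstar]
  calc ∫ z, ℓ bhat z ∂μ - ∫ z, ℓ bstar z ∂μ = ∫ z, ℓ bhat z - ℓ bstar z ∂μ :=
        (integral_sub hbhat_int_μ hbstar_int_μ).symm
    _ ≤ ∫ z, ℓ bhat z - ℓ bstar z ∂μ - ∫ z, ℓ bhat z - ℓ bstar z ∂ν := by linarith
    _ ≤ M * ∫ z, |(μ.rnDeriv ν z).toReal - 1| ∂ν :=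
        integral_sub_integral_le_mul_integral_abs_toReal_rnDeriv_sub_one hμν
          (hbhat_int_μ.sub hbstar_int_μ) (hbhat_int_ν.sub hbstar_int_ν) hM
    _ ≤ M * √(2 * (klDiv μ ν).toReal) := by
        rw [hkl]
        gcongr
        exact integral_abs_toReal_rnDeriv_sub_one_le μ ν hμν hllr

/-- Bayes-decision comparison lemma: if `b̂` minimizes the `ν`-risk, `b*` minimizes the `μ`-risk,
and the loss difference `|ℓ(b̂,·) − ℓ(b*,·)|` is bounded by `M`, then the excess `μ`-risk of `b̂`
is at most `M √(2 KL(μ ‖ ν))`.  (When `KL(μ ‖ ν) = ∞` the inequality is trivially true, which is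
recorded by the left disjunct.) -/
theorem bayes_decision_comparison
    {Z : Type*} [MeasurableSpace Z] (μ ν : Measure Z)
    [IsProbabilityMeasure μ] [IsProbabilityMeasure ν]
    {B : Type*} (ℓ : B → Z → ℝ) (hℓ_meas : ∀ b, Measurable (ℓ b))
    (bhat bstar : B)
    (hbhat_int_μ : Integrable (ℓ bhat) μ) (hbhat_int_ν : Integrable (ℓ bhat) ν)
    (hbstar_int_μ : Integrable (ℓ bstar) μ) (hbstar_int_ν : Integrable (ℓ bstar) ν)
    (hbhat : ∀ b : B, ∫ z, ℓ bhat z ∂ν ≤ ∫ z, ℓ b z ∂ν)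
    (hbstar : ∀ b : B, ∫ z, ℓ bstar z ∂μ ≤ ∫ z, ℓ b z ∂μ)
    (M : ℝ) (hM : ∀ z, |ℓ bhat z - ℓ bstar z| ≤ M) :
    klDiv μ ν = ⊤ ∨
      ∫ z, ℓ bhat z ∂μ - ∫ z, ℓ bstar z ∂μ ≤ M * Real.sqrt (2 * (klDiv μ ν).toReal) :=
  bayes_decision_comparison_general μ ν ℓ bhat bstar hbhat_int_μ hbhat_int_ν hbstar_int_μ
    hbstar_int_ν hbhat M hM
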